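/- arXiv:2601.18502 — 4 statements merged into one kernel-verified Lean document; each statement's English description precedes it below -/
import Mathlib

section
/- There exists a sequence A = ⟨A_n : n < ω⟩ with each A_n a singleton subset of P(n) such that G(A) = { x ⊆ ω : x ∩ n ∈ A_n for infinitely many n } is comeager in Cantor space. -/
open Set

private noncomputable def guessFun : ℕ → (ℕ → Bool) := fun n i =>
  (((Encodable.decode n.unpair.2 : Option (List Bool)).getD []).getD i false)

private lemma guess_open (N : ℕ) :
    IsOpen {x : ℕ → Bool | ∃ n, N ≤ n ∧ ∀ i < n, x i = guessFun n i} := by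
  have : {x : ℕ → Bool | ∃ n, N ≤ n ∧ ∀ i < n, x i = guessFun n i} =
      ⋃ n, ⋃ (_ : N ≤ n), (Set.Iio n).pi (fun i => {guessFun n i}) := by
    ext x
    simp [Set.mem_pi]
  rw [this]
  exact isOpen_iUnion fun n => isOpen_iUnion fun _ =>
    isOpen_set_pi (Set.finite_Iio n) (fun i _ => isOpen_discrete _)

private lemma guess_dense (N : ℕ) :
    Dense {x : ℕ → Bool | ∃ n, N ≤ n ∧ ∀ i < n, x i = guessFun n i} := by
  rw [dense_iff_inter_open]
  intro o ho ⟨y, hy⟩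
  obtain ⟨I, u, hu, hsub⟩ := isOpen_pi_iff.1 ho y hy
  set L := I.sup id + 1 with hL
  set l : List Bool := (List.range L).map y with hl
  set n := Nat.pair N (Encodable.encode l) with hn
  have hNn : N ≤ n := Nat.left_le_pair _ _
  have ha : ∀ i < L, guessFun n i = y i := by
    intro i hi
    have h2 : n.unpair.2 = Encodable.encode l := by simp [hn]
    have hlen : l.length = L := by simp [hl]
    simp only [guessFun, h2, Encodable.encodek, Option.getD_some]
    rw [List.getD_eq_getElem l false (by omega)]
    simp [hl]
  refine ⟨guessFun n, ?_, ⟨n, hNn, fun i _ => rfl⟩⟩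
  apply hsub
  intro i hi
  have hiL : i < L := by
    have : i ≤ I.sup id := Finset.le_sup (f := id) hi
    omega
  rw [ha i hiL]
  exact (hu i hi).2

/-- There is a sequence `A = ⟨A_n⟩` with each `A_n` a singleton subset of `P(n)`
(given by a single point `a n`, so that `x ∩ n ∈ A_n` iff `x` agrees with `a n`
below `n`) such that the set of guessed reals is comeager in Cantor space. -/
theorem exists_singleton_guessing_comeager :
    ∃ a : ℕ → (ℕ → Bool),
      {x : ℕ → Bool | {n | ∀ i < n, x i = a n i}.Infinite} ∈ residual (ℕ → Bool) := by
  refine ⟨guessFun, ?_⟩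
  rw [mem_residual_iff]
  refine ⟨Set.range (fun N => {x : ℕ → Bool | ∃ n, N ≤ n ∧ ∀ i < n, x i = guessFun n i}),
    ?_, ?_, countable_range _, ?_⟩
  · rintro t ⟨N, rfl⟩; exact guess_open N
  · rintro t ⟨N, rfl⟩; exact guess_dense N
  · intro x hx
    simp only [Set.sInter_range, Set.mem_iInter, Set.mem_setOf_eq] at hx
    apply Set.infinite_of_not_bddAbove
    rintro ⟨B, hB⟩
    obtain ⟨n, hn, hagree⟩ := hx (B + 1)
    have := hB (show n ∈ _ from hagree)
    omega
end

section
/- If (E_n) is a sequence of pairwise independent events in a probability space with ∑_n P(E_n) = ∞, then P(limsup E_n) = 1. -/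
open MeasureTheory Filter Topology
open scoped ENNReal

/-!
Let `S` count the events `E k`, `n ≤ k < n + N`, that occur, and let `m` be its mean
`∑ P(E k)`. Pairwise independence is exactly what makes the variance of `S` additive, so
`Var S = ∑ P(E k)(1 - P(E k)) ≤ m`, and Chebyshev's inequality gives
`P(S = 0) ≤ Var S / m² ≤ 1 / m`. As the series diverges, `m → ∞`, so every tail union
`⋃ k ≥ n, E k` has full measure, and hence so has their countable intersection `limsup E`.
-/

namespace ProbabilityTheory

variable {Ω ι : Type*} {mΩ : MeasurableSpace Ω} {μ : Measure Ω}

theorem IndepSet.indepFun_indicator_one {s t : Set Ω} (h : IndepSet s t μ) :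
    IndepFun (s.indicator (1 : Ω → ℝ)) (t.indicator (1 : Ω → ℝ)) μ :=
  indep_of_indep_of_le_right
    (indep_of_indep_of_le_left h
      (MeasurableSpace.comap_indicator_const_le_generateFrom_singleton s 1))
    (MeasurableSpace.comap_indicator_const_le_generateFrom_singleton t 1)

theorem memLp_indicator_one [IsFiniteMeasure μ] {s : Set Ω} (hs : MeasurableSet s) (p : ℝ≥0∞) :
    MemLp (s.indicator (1 : Ω → ℝ)) p μ :=
  memLp_indicator_const p hs 1 (.inr (measure_ne_top μ s))

theorem variance_indicator_one_le [IsProbabilityMeasure μ] {s : Set Ω} (hs : MeasurableSet s) :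
    variance (s.indicator (1 : Ω → ℝ)) μ ≤ μ.real s := by
  have hsq : s.indicator (1 : Ω → ℝ) ^ 2 = s.indicator 1 := by
    ext ω
    by_cases hω : ω ∈ s <;> simp [hω]
  calc variance (s.indicator 1) μ ≤ μ[s.indicator (1 : Ω → ℝ) ^ 2] :=
        variance_le_expectation_sq (memLp_indicator_one hs 2).aestronglyMeasurable
    _ = μ.real s := by rw [hsq, integral_indicator_one hs]

theorem variance_sum_indicator_one_le [IsProbabilityMeasure μ] {E : ι → Set Ω} (s : Finset ι)
    (hE : ∀ i, MeasurableSet (E i))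
    (hindep : (s : Set ι).Pairwise fun i j ↦ IndepSet (E i) (E j) μ) :
    variance (∑ i ∈ s, (E i).indicator (1 : Ω → ℝ)) μ ≤ ∑ i ∈ s, μ.real (E i) := by
  rw [IndepFun.variance_sum (fun i _ ↦ memLp_indicator_one (hE i) 2)
    fun i hi j hj hij ↦ (hindep hi hj hij).indepFun_indicator_one]
  exact Finset.sum_le_sum fun i _ ↦ variance_indicator_one_le (hE i)

theorem measure_eq_zero_le_variance_div_sq [IsFiniteMeasure μ] {X : Ω → ℝ} (hX : MemLp X 2 μ)
    (hmean : μ[X] ≠ 0) :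
    μ {ω | X ω = 0} ≤ ENNReal.ofReal (variance X μ / μ[X] ^ 2) := by
  calc μ {ω | X ω = 0} ≤ μ {ω | |μ[X]| ≤ |X ω - μ[X]|} :=
        measure_mono fun ω (hω : X ω = 0) ↦ by simp [hω]
    _ ≤ ENNReal.ofReal (variance X μ / |μ[X]| ^ 2) :=
        meas_ge_le_variance_div_sq hX (abs_pos.2 hmean)
    _ = ENNReal.ofReal (variance X μ / μ[X] ^ 2) := by rw [sq_abs]

theorem measure_compl_biUnion_le_inv_sum [IsProbabilityMeasure μ] {E : ι → Set Ω} (s : Finset ι)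
    (hE : ∀ i, MeasurableSet (E i))
    (hindep : (s : Set ι).Pairwise fun i j ↦ IndepSet (E i) (E j) μ) :
    μ (⋃ i ∈ s, E i)ᶜ ≤ (∑ i ∈ s, μ (E i))⁻¹ := by
  set S : Ω → ℝ := ∑ i ∈ s, (E i).indicator 1 with hS
  set m : ℝ := ∑ i ∈ s, μ.real (E i)
  have hm_ofReal : ENNReal.ofReal m = ∑ i ∈ s, μ (E i) := by
    rw [ENNReal.ofReal_sum_of_nonneg fun i _ ↦ measureReal_nonneg]
    simp
  rcases (show 0 ≤ m from Finset.sum_nonneg fun i _ ↦ measureReal_nonneg).eq_or_lt with hm0 | hm0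
  · rw [← hm_ofReal, ← hm0, ENNReal.ofReal_zero, ENNReal.inv_zero]
    exact le_top
  have hmean : μ[S] = m := by
    simp only [hS, Finset.sum_apply]
    rw [integral_finsetSum _ fun i _ ↦ (memLp_indicator_one (hE i) 1).integrable le_rfl]
    exact Finset.sum_congr rfl fun i _ ↦ integral_indicator_one (hE i)
  have hsub : (⋃ i ∈ s, E i)ᶜ ⊆ {ω | S ω = 0} := by
    intro ω hω
    simp only [Set.mem_compl_iff, Set.mem_iUnion, not_exists] at hω
    exact (Finset.sum_apply ..).trans <|
      Finset.sum_eq_zero fun i hi ↦ Set.indicator_of_notMem (hω i hi) _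
  calc μ (⋃ i ∈ s, E i)ᶜ ≤ μ {ω | S ω = 0} := measure_mono hsub
    _ ≤ ENNReal.ofReal (variance S μ / m ^ 2) := by
        rw [← hmean]
        exact measure_eq_zero_le_variance_div_sq
          (memLp_finsetSum' s fun i _ ↦ memLp_indicator_one (hE i) 2) (hmean ▸ hm0.ne')
    _ ≤ ENNReal.ofReal (m / m ^ 2) := by
        gcongr
        exact variance_sum_indicator_one_le s hE hindep
    _ = (∑ i ∈ s, μ (E i))⁻¹ := by
        rw [← hm_ofReal, ← ENNReal.ofReal_inv_of_pos hm0, sq, div_mul_cancel_left₀ hm0.ne']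

theorem measure_compl_iUnion_ge_eq_zero [IsProbabilityMeasure μ] {E : ℕ → Set Ω}
    (hE : ∀ i, MeasurableSet (E i)) (hindep : Pairwise fun i j ↦ IndepSet (E i) (E j) μ)
    (hsum : ∑' i, μ (E i) = ∞) (n : ℕ) :
    μ (⋃ k ≥ n, E k)ᶜ = 0 := by
  have htail : ∑' k, μ (E (k + n)) = ∞ := by
    have hsplit : ∑' i, μ (E i) = ∑ i ∈ Finset.range n, μ (E i) + ∑' k, μ (E (k + n)) :=
      ENNReal.summable.hasSum.sum_range_add.tsum_eq
    rw [hsum, eq_comm, ENNReal.add_eq_top] at hsplit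
    exact hsplit.resolve_left (ENNReal.sum_ne_top.2 fun i _ ↦ measure_ne_top μ _)
  have hlim : Tendsto (fun N ↦ (∑ k ∈ Finset.range N, μ (E (k + n)))⁻¹) atTop (𝓝 0) := by
    rw [← ENNReal.inv_top, ← htail]
    exact (ENNReal.tendsto_nat_tsum _).inv
  refine nonpos_iff_eq_zero.1 (ge_of_tendsto' hlim fun N ↦ ?_)
  calc μ (⋃ k ≥ n, E k)ᶜ ≤ μ (⋃ k ∈ Finset.range N, E (k + n))ᶜ :=
        measure_mono <| Set.compl_subset_compl.2 <|
          Set.iUnion₂_subset fun k _ ↦ Set.subset_biUnion_of_mem (Nat.le_add_left n k)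
    _ ≤ _ := measure_compl_biUnion_le_inv_sum _ (fun k ↦ hE _)
          ((hindep.comp_of_injective (add_left_injective n)).set_pairwise _)

theorem measure_limsup_eq_one_of_pairwise_indepSet [IsProbabilityMeasure μ] {E : ℕ → Set Ω}
    (hE : ∀ i, MeasurableSet (E i)) (hindep : Pairwise fun i j ↦ IndepSet (E i) (E j) μ)
    (hsum : ∑' i, μ (E i) = ∞) :
    μ (limsup E atTop) = 1 := by
  suffices μ (limsup E atTop)ᶜ = 0 from (measure_congr (ae_eq_univ.2 this)).trans measure_univ
  rw [limsup_eq_iInf_iSup_of_nat]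
  simp only [Set.iInf_eq_iInter, Set.iSup_eq_iUnion, Set.compl_iInter]
  exact measure_iUnion_null (measure_compl_iUnion_ge_eq_zero hE hindep hsum)

end ProbabilityTheory

/-- Second Borel–Cantelli lemma (pairwise independence version): if the events `E n`
are pairwise independent and `∑ P(E n) = ∞`, then `P(limsup E n) = 1`. -/
theorem borel_cantelli_second
    {X : Type*} [MeasurableSpace X] (P : Measure X) [IsProbabilityMeasure P]
    (E : ℕ → Set X) (hmeas : ∀ n, MeasurableSet (E n))
    (hindep : ∀ n m, n ≠ m → P (E n ∩ E m) = P (E n) * P (E m))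
    (hsum : ∑' n, P (E n) = ∞) :
    P (Filter.limsup E Filter.atTop) = 1 :=
  ProbabilityTheory.measure_limsup_eq_one_of_pairwise_indepSet hmeas
    (fun n m hnm ↦
      (ProbabilityTheory.indepSet_iff_measure_inter_eq_mul (hmeas n) (hmeas m) P).2
        (hindep n m hnm))
    hsum
end

section
/- If π : ω → ω satisfies π(n) ≤ 2^n for all n and ∑_n π(n)/2^n = ∞, then there exists a sequence ⟨A_n⟩ with A_n ⊆ P(n), |A_n| = π(n), such that the set { x ⊆ ω : x ∩ n ∈ A_n for infinitely many n } has measure 1 under the Bernoulli(1/2) product measure. -/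
open MeasureTheory
open scoped ENNReal

section Guessing

variable {n : ℕ}

/-- The restriction map `P(n+1) → P(n)`. -/
private def res (s : Finset (Fin (n + 1))) : Finset (Fin n) :=
  Finset.univ.filter fun i => Fin.castSucc i ∈ s

/-- The "extension by `castSucc`" map `P(n) → P(n+1)`. -/
private def up (t : Finset (Fin n)) : Finset (Fin (n + 1)) :=
  t.image Fin.castSucc

private lemma mem_up {t : Finset (Fin n)} {i : Fin n} :
    Fin.castSucc i ∈ up t ↔ i ∈ t := by
  simp [up, Fin.castSucc_inj]

private lemma last_not_mem_up {t : Finset (Fin n)} : Fin.last n ∉ up t := by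
  simp only [up, Finset.mem_image]
  rintro ⟨a, -, ha⟩
  exact absurd ha (Fin.castSucc_lt_last a).ne

private lemma res_up (t : Finset (Fin n)) : res (up t) = t := by
  ext i
  simp [res, mem_up]

private lemma res_insert_last (s : Finset (Fin (n + 1))) :
    res (insert (Fin.last n) s) = res s := by
  ext i
  simp [res, (Fin.castSucc_lt_last i).ne]

private lemma up_res_of_not_mem {s : Finset (Fin (n + 1))} (h : Fin.last n ∉ s) :
    up (res s) = s := by
  ext j
  induction j using Fin.lastCases with
  | last => simp [last_not_mem_up, h]
  | cast i => simp [mem_up, res]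

private lemma insert_up_res_of_mem {s : Finset (Fin (n + 1))} (h : Fin.last n ∈ s) :
    insert (Fin.last n) (up (res s)) = s := by
  ext j
  induction j using Fin.lastCases with
  | last => simp [h]
  | cast i =>
    simp [Finset.mem_insert, (Fin.castSucc_lt_last i).ne, mem_up, res]

/-- Extension of a family of subsets of `n` to subsets of `n+1`. -/
private def extUp (S : Finset (Finset (Fin n))) : Finset (Finset (Fin (n + 1))) :=
  Finset.univ.filter fun s => res s ∈ S

private lemma mem_extUp {S : Finset (Finset (Fin n))} {s : Finset (Fin (n + 1))} :
    s ∈ extUp S ↔ res s ∈ S := by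
  simp [extUp]

private lemma up_injective : Function.Injective (up (n := n)) := by
  intro a b h
  rw [← res_up a, h, res_up]

private lemma card_extUp (S : Finset (Finset (Fin n))) :
    (extUp S).card = 2 * S.card := by
  have hdecomp : extUp S = S.image up ∪ S.image (fun t => insert (Fin.last n) (up t)) := by
    ext s
    rw [mem_extUp, Finset.mem_union, Finset.mem_image, Finset.mem_image]
    constructor
    · intro hs
      by_cases h : Fin.last n ∈ s
      · exact Or.inr ⟨res s, hs, insert_up_res_of_mem h⟩
      · exact Or.inl ⟨res s, hs, up_res_of_not_mem h⟩
    · rintro (⟨t, ht, rfl⟩ | ⟨t, ht, rfl⟩)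
      · rwa [res_up]
      · rwa [res_insert_last, res_up]
  have hinj2 : Function.Injective (fun t : Finset (Fin n) => insert (Fin.last n) (up t)) := by
    intro a b h
    have h' : insert (Fin.last n) (up a) = insert (Fin.last n) (up b) := h
    have : res (insert (Fin.last n) (up a)) = res (insert (Fin.last n) (up b)) := by rw [h']
    rwa [res_insert_last, res_insert_last, res_up, res_up] at this
  have hdisj : Disjoint (S.image up) (S.image fun t => insert (Fin.last n) (up t)) := by
    rw [Finset.disjoint_left]
    rintro a ha hb
    rw [Finset.mem_image] at ha hb
    obtain ⟨t, -, rfl⟩ := ha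
    obtain ⟨t', -, h⟩ := hb
    exact last_not_mem_up (h ▸ Finset.mem_insert_self _ _)
  rw [hdecomp, Finset.card_union_of_disjoint hdisj, Finset.card_image_of_injective _ up_injective,
    Finset.card_image_of_injective _ hinj2]
  ring

/-- Choose a set of cardinality `k` containing `S` if `S` is small, contained in `S` if `S` is
large. -/
private noncomputable def pick (n k : ℕ) (S : Finset (Finset (Fin n))) :
    Finset (Finset (Fin n)) :=
  if h : S.card ≤ k then
    if h2 : k ≤ Fintype.card (Finset (Fin n)) then
      (Finset.exists_subsuperset_card_eq (Finset.subset_univ S) h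
        (by simpa [Finset.card_univ] using h2)).choose
    else S
  else (Finset.exists_subset_card_eq (le_of_not_ge h)).choose

private lemma pick_card {n k : ℕ} {S : Finset (Finset (Fin n))}
    (h2 : k ≤ Fintype.card (Finset (Fin n))) : (pick n k S).card = k := by
  unfold pick
  by_cases h : S.card ≤ k
  · rw [dif_pos h, dif_pos h2]
    exact (Finset.exists_subsuperset_card_eq (Finset.subset_univ S) h
      (by simpa [Finset.card_univ] using h2)).choose_spec.2.2
  · rw [dif_neg h]
    exact (Finset.exists_subset_card_eq (le_of_not_ge h)).choose_spec.2

private lemma pick_superset {n k : ℕ} {S : Finset (Finset (Fin n))}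
    (h : S.card ≤ k) (h2 : k ≤ Fintype.card (Finset (Fin n))) : S ⊆ pick n k S := by
  unfold pick
  rw [dif_pos h, dif_pos h2]
  exact (Finset.exists_subsuperset_card_eq (Finset.subset_univ S) h
    (by simpa [Finset.card_univ] using h2)).choose_spec.1

private lemma pick_subset {n k : ℕ} {S : Finset (Finset (Fin n))}
    (h : k < S.card) : pick n k S ⊆ S := by
  unfold pick
  rw [dif_neg (by omega)]
  exact (Finset.exists_subset_card_eq (le_of_lt h)).choose_spec.1

/-- The "uncovered" sets at stage `n`. -/
private noncomputable def Uf (π : ℕ → ℕ) : (n : ℕ) → Finset (Finset (Fin n))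
  | 0 => Finset.univ
  | n + 1 =>
      if (Uf π n).card ≤ π n then Finset.univ
      else extUp (Uf π n \ pick n (π n) (Uf π n))

/-- The guessing sets. -/
private noncomputable def Af (π : ℕ → ℕ) (n : ℕ) : Finset (Finset (Fin n)) :=
  pick n (π n) (Uf π n)

private lemma card_finset_fin (n : ℕ) : Fintype.card (Finset (Fin n)) = 2 ^ n := by
  simp [Fintype.card_finset]

private lemma Uf_succ_of_restart {π : ℕ → ℕ} {n : ℕ} (h : (Uf π n).card ≤ π n) :
    Uf π (n + 1) = Finset.univ := by
  rw [Uf, if_pos h]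

private lemma Uf_succ_of_no_restart {π : ℕ → ℕ} {n : ℕ} (h : ¬ (Uf π n).card ≤ π n) :
    Uf π (n + 1) = extUp (Uf π n \ Af π n) := by
  rw [Uf, if_neg h]; rfl

private lemma card_Uf_succ {π : ℕ → ℕ} {n : ℕ} (h : π n < (Uf π n).card)
    (hle : π n ≤ 2 ^ n) :
    (Uf π (n + 1)).card = 2 * ((Uf π n).card - π n) := by
  rw [Uf_succ_of_no_restart (by omega), card_extUp, Af,
    Finset.card_sdiff_of_subset (pick_subset h), pick_card]
  rw [card_finset_fin]; exact hle

/-- restriction of `x` to `n` as a subset of `Fin n`. -/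
private def rx (x : ℕ → Bool) (n : ℕ) : Finset (Fin n) :=
  Finset.univ.filter fun i : Fin n => x i = true

private lemma res_rx (x : ℕ → Bool) (n : ℕ) : res (rx x (n + 1)) = rx x n := by
  ext i
  simp [res, rx, Fin.coe_castSucc]

/-- Telescoping identity when there is no restart between `N` and `M`. -/
private lemma telescope {π : ℕ → ℕ} (hle : ∀ n, π n ≤ 2 ^ n) {N : ℕ}
    (hnr : ∀ n, N ≤ n → π n < (Uf π n).card) :
    ∀ M, N ≤ M →
      2 ^ (M - N) * (Uf π N).card
        = (Uf π M).card + ∑ n ∈ Finset.Ico N M, 2 ^ (M - n) * π n := by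
  intro M hM
  induction M, hM using Nat.le_induction with
  | base => simp
  | succ M hM ih =>
    have hlt : π M < (Uf π M).card := hnr M hM
    have hstep : (Uf π (M + 1)).card = 2 * ((Uf π M).card - π M) :=
      card_Uf_succ hlt (hle M)
    have hsum : ∑ n ∈ Finset.Ico N (M + 1), 2 ^ (M + 1 - n) * π n
        = (∑ n ∈ Finset.Ico N M, 2 ^ (M + 1 - n) * π n) + 2 ^ (M + 1 - M) * π M :=
      Finset.sum_Ico_succ_top hM _
    have hpow : ∀ n ∈ Finset.Ico N M, 2 ^ (M + 1 - n) * π n = 2 * (2 ^ (M - n) * π n) := by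
      intro n hn
      rw [Finset.mem_Ico] at hn
      have : M + 1 - n = (M - n) + 1 := by omega
      rw [this, pow_succ]
      ring
    have h1 : 2 ^ (M + 1 - N) = 2 * 2 ^ (M - N) := by
      have : M + 1 - N = (M - N) + 1 := by omega
      rw [this, pow_succ]; ring
    calc 2 ^ (M + 1 - N) * (Uf π N).card
        = 2 * (2 ^ (M - N) * (Uf π N).card) := by rw [h1]; ring
      _ = 2 * ((Uf π M).card + ∑ n ∈ Finset.Ico N M, 2 ^ (M - n) * π n) := by rw [ih]
      _ = 2 * (Uf π M).card + ∑ n ∈ Finset.Ico N M, 2 * (2 ^ (M - n) * π n) := by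
          rw [mul_add, Finset.mul_sum]
      _ = ((Uf π (M + 1)).card + 2 ^ (M + 1 - M) * π M)
            + ∑ n ∈ Finset.Ico N M, 2 ^ (M + 1 - n) * π n := by
          rw [hstep, Finset.sum_congr rfl hpow]
          have : M + 1 - M = 1 := by omega
          rw [this]
          omega
      _ = (Uf π (M + 1)).card + ∑ n ∈ Finset.Ico N (M + 1), 2 ^ (M + 1 - n) * π n := by
          rw [hsum]; ring

/-- There are infinitely many restart stages. -/
private lemma restarts_infinite {π : ℕ → ℕ} (hle : ∀ n, π n ≤ 2 ^ n)
    (hsum : ∑' n, (π n : ℝ≥0∞) / 2 ^ n = ∞) (N : ℕ) :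
    ∃ n, N ≤ n ∧ (Uf π n).card ≤ π n := by
  by_contra hcon
  push_neg at hcon
  have hnr : ∀ n, N ≤ n → π n < (Uf π n).card := fun n hn => hcon n hn
  -- ℕ bound on weighted partial sums
  have hbound : ∀ M, N ≤ M → ∑ n ∈ Finset.Ico N M, 2 ^ (M - n) * π n ≤ 2 ^ M := by
    intro M hM
    have h1 := telescope hle hnr M hM
    have h2 : (Uf π N).card ≤ 2 ^ N := by
      calc (Uf π N).card ≤ Fintype.card (Finset (Fin N)) := Finset.card_le_univ _
        _ = 2 ^ N := card_finset_fin N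
    have h3 : 2 ^ (M - N) * (Uf π N).card ≤ 2 ^ (M - N) * 2 ^ N :=
      Nat.mul_le_mul_left _ h2
    have h4 : 2 ^ (M - N) * 2 ^ N = 2 ^ M := by
      rw [← pow_add]
      congr 1
      omega
    omega
  -- translate to ℝ≥0∞ bound on partial sums of `π n / 2 ^ n`
  have hpartial : ∀ M, ∑ n ∈ Finset.Ico N M, (π n : ℝ≥0∞) / 2 ^ n ≤ 1 := by
    intro M
    rcases le_or_gt M N with h | h
    · rw [Finset.Ico_eq_empty (by omega)]
      simp
    have hM : N ≤ M := h.le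
    have hterm : ∀ n ∈ Finset.Ico N M,
        (π n : ℝ≥0∞) / 2 ^ n = ((2 ^ (M - n) * π n : ℕ) : ℝ≥0∞) / 2 ^ M := by
      intro n hn
      rw [Finset.mem_Ico] at hn
      have hMn : M - n + n = M := by omega
      push_cast
      rw [ENNReal.div_eq_div_iff (by positivity) (by simp) (by positivity) (by simp)]
      rw [show ((2:ℝ≥0∞) ^ M) = 2 ^ (M - n) * 2 ^ n from by rw [← pow_add, hMn]]
      ring
    calc ∑ n ∈ Finset.Ico N M, (π n : ℝ≥0∞) / 2 ^ n
        = ∑ n ∈ Finset.Ico N M, ((2 ^ (M - n) * π n : ℕ) : ℝ≥0∞) / 2 ^ M :=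
          Finset.sum_congr rfl hterm
      _ = ((∑ n ∈ Finset.Ico N M, 2 ^ (M - n) * π n : ℕ) : ℝ≥0∞) / 2 ^ M := by
          push_cast
          simp only [div_eq_mul_inv, Finset.sum_mul]
      _ ≤ ((2 ^ M : ℕ) : ℝ≥0∞) / 2 ^ M := by
          gcongr
          exact_mod_cast hbound M hM
      _ = 1 := by
          push_cast
          rw [ENNReal.div_self (by positivity) (by simp)]
  -- each term is at most 1
  have hterm1 : ∀ n, (π n : ℝ≥0∞) / 2 ^ n ≤ 1 := by
    intro n
    rw [ENNReal.div_le_iff (by positivity) (by simp), one_mul]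
    exact_mod_cast hle n
  -- total sum is finite, contradiction
  have htot : ∑' n, (π n : ℝ≥0∞) / 2 ^ n ≤ N + 1 := by
    rw [ENNReal.tsum_eq_iSup_nat]
    refine iSup_le fun M => ?_
    rcases le_or_gt M N with h | h
    · calc ∑ n ∈ Finset.range M, (π n : ℝ≥0∞) / 2 ^ n
          ≤ ∑ _n ∈ Finset.range M, (1 : ℝ≥0∞) := Finset.sum_le_sum fun n _ => hterm1 n
        _ = M := by simp
        _ ≤ N + 1 := by exact_mod_cast le_trans (Nat.cast_le.mpr h) (by simp)
    · have hsplit : Finset.range M = Finset.Ico 0 N ∪ Finset.Ico N M := by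
        rw [Finset.range_eq_Ico, ← Finset.Ico_union_Ico_eq_Ico (Nat.zero_le N) h.le]
      rw [hsplit, Finset.sum_union (by
        simp [Finset.disjoint_left, Finset.mem_Ico]
        omega)]
      have hA : ∑ n ∈ Finset.Ico 0 N, (π n : ℝ≥0∞) / 2 ^ n ≤ N := by
        calc ∑ n ∈ Finset.Ico 0 N, (π n : ℝ≥0∞) / 2 ^ n
            ≤ ∑ _n ∈ Finset.Ico 0 N, (1 : ℝ≥0∞) := Finset.sum_le_sum fun n _ => hterm1 n
          _ = N := by simp
      calc _ ≤ (N : ℝ≥0∞) + 1 := add_le_add hA (hpartial M)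
        _ = N + 1 := rfl
  rw [hsum] at htot
  exact absurd htot (by simp [ENNReal.add_lt_top])

/-- Along a run starting inside the uncovered set, either we stay uncovered or we get guessed. -/
private lemma run {π : ℕ → ℕ} (hle : ∀ n, π n ≤ 2 ^ n) (x : ℕ → Bool) (n : ℕ)
    (hn : rx x n ∈ Uf π n) :
    ∀ k, rx x (n + k) ∈ Uf π (n + k) ∨ ∃ m, n ≤ m ∧ m < n + k ∧ rx x m ∈ Af π m := by
  intro k
  induction k with
  | zero => exact Or.inl hn
  | succ k ih =>
    rcases ih with h | ⟨m, hm1, hm2, hm3⟩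
    · set j := n + k with hj
      by_cases hc : (Uf π j).card ≤ π j
      · right
        refine ⟨j, Nat.le_add_right n k, by omega, ?_⟩
        exact pick_superset hc (by rw [card_finset_fin]; exact hle j) h
      · by_cases hA : rx x j ∈ Af π j
        · exact Or.inr ⟨j, Nat.le_add_right n k, by omega, hA⟩
        · left
          have : n + (k + 1) = j + 1 := by omega
          rw [this, Uf_succ_of_no_restart hc, mem_extUp, res_rx]
          exact Finset.mem_sdiff.mpr ⟨h, hA⟩
    · exact Or.inr ⟨m, hm1, by omega, hm3⟩

/-- Every real is guessed at arbitrarily large stages. -/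
private lemma guessed_unbounded {π : ℕ → ℕ} (hle : ∀ n, π n ≤ 2 ^ n)
    (hsum : ∑' n, (π n : ℝ≥0∞) / 2 ^ n = ∞) (x : ℕ → Bool) (N : ℕ) :
    ∃ m, N ≤ m ∧ rx x m ∈ Af π m := by
  obtain ⟨j₁, hj₁, hr₁⟩ := restarts_infinite hle hsum N
  have hU : Uf π (j₁ + 1) = Finset.univ := Uf_succ_of_restart hr₁
  have hx : rx x (j₁ + 1) ∈ Uf π (j₁ + 1) := by rw [hU]; exact Finset.mem_univ _
  obtain ⟨j₂, hj₂, hr₂⟩ := restarts_infinite hle hsum (j₁ + 1)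
  have hkey := run hle x (j₁ + 1) hx (j₂ - (j₁ + 1))
  have heq : j₁ + 1 + (j₂ - (j₁ + 1)) = j₂ := by omega
  rw [heq] at hkey
  rcases hkey with h | ⟨m, hm1, hm2, hm3⟩
  · exact ⟨j₂, by omega,
      pick_superset hr₂ (by rw [card_finset_fin]; exact hle j₂) h⟩
  · exact ⟨m, by omega, hm3⟩

end Guessing

/-- If `π(n) ≤ 2^n` and `∑ π(n)/2^n = ∞`, then there is a sequence `⟨A_n⟩` with
`A_n ⊆ P(n)`, `|A_n| = π(n)`, whose set of guessed reals has Bernoulli(1/2)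
product measure 1. -/
theorem exists_guessing_sequence_measure_one
    (μ : Measure (ℕ → Bool)) [IsProbabilityMeasure μ]
    (hμ : ∀ (s : Finset ℕ) (b : ℕ → Bool),
      μ {x | ∀ i ∈ s, x i = b i} = (1 / 2 : ℝ≥0∞) ^ s.card)
    (π : ℕ → ℕ) (hle : ∀ n, π n ≤ 2 ^ n)
    (hsum : ∑' n, (π n : ℝ≥0∞) / 2 ^ n = ∞) :
    ∃ A : (n : ℕ) → Finset (Finset (Fin n)),
      (∀ n, (A n).card = π n) ∧
      μ {x | {n | (Finset.univ.filter fun i : Fin n => x i = true) ∈ A n}.Infinite}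
        = 1 := by
  refine ⟨Af π, fun n => pick_card (by rw [card_finset_fin]; exact hle n), ?_⟩
  have huniv : {x : ℕ → Bool |
      {n | (Finset.univ.filter fun i : Fin n => x i = true) ∈ Af π n}.Infinite} = Set.univ := by
    refine Set.eq_univ_of_forall fun x => ?_
    refine Set.infinite_of_forall_exists_gt fun a => ?_
    obtain ⟨m, hm1, hm2⟩ := guessed_unbounded hle hsum x (a + 1)
    exact ⟨m, hm2, by omega⟩
  rw [huniv, measure_univ]
end

section
/- If π : ω → ω satisfies π(n) ≤ 2^n and ∑_n π(n)/2^n = ∞, then there exists a sequence of sets I_n ⊆ P(n) with |I_n| = π(n) such that every x ⊆ ω satisfies x ∩ n ∈ I_n for infinitely many n (i.e., the guessed set is all of P(ω)). -/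
open scoped ENNReal

/-- bit of x at n as a natural number -/
def gbit (x : ℕ → Bool) (n : ℕ) : ℕ := cond (x n) 1 0

/-- lexicographic (high-bit-first) code of x ∩ n -/
def gcode (x : ℕ → Bool) : ℕ → ℕ
  | 0 => 0
  | n+1 => 2 * gcode x n + gbit x n

/-- starting position of the n-th interval -/
def gt' (p : ℕ → ℕ) : ℕ → ℕ
  | 0 => 0
  | n+1 => (2 * (gt' p n + p n)) % 2^(n+1)

/-- distance from start of interval to the code of x ∩ n, mod 2^n -/
def gd (p : ℕ → ℕ) (x : ℕ → Bool) (n : ℕ) : ℕ :=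
  (gcode x n + (2^n - gt' p n)) % 2^n

/-- decode a number < 2^n to a subset of Fin n -/
def gdec (n m : ℕ) : Finset (Fin n) :=
  Finset.univ.filter fun i => m.testBit (n-1-(i:ℕ)) = true

/-- the guessing sets -/
def gI (p : ℕ → ℕ) (n : ℕ) : Finset (Finset (Fin n)) :=
  (Finset.range (p n)).image fun j => gdec n ((gt' p n + j) % 2^n)

lemma gbit_le (x : ℕ → Bool) (n : ℕ) : gbit x n ≤ 1 := by
  unfold gbit; cases x n <;> simp

lemma gcode_lt (x : ℕ → Bool) (n : ℕ) : gcode x n < 2^n := by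
  induction n with
  | zero => simp [gcode]
  | succ n ih =>
    have := gbit_le x n
    have : gcode x (n+1) = 2 * gcode x n + gbit x n := rfl
    rw [this, pow_succ]
    omega

lemma gt'_lt (p : ℕ → ℕ) (n : ℕ) : gt' p n < 2^n := by
  cases n with
  | zero => simp [gt']
  | succ n => exact Nat.mod_lt _ (by positivity)

lemma gd_lt (p : ℕ → ℕ) (x : ℕ → Bool) (n : ℕ) : gd p x n < 2^n :=
  Nat.mod_lt _ (by positivity)

lemma testBit_gcode (x : ℕ → Bool) (n k : ℕ) (hk : k < n) :
    (gcode x n).testBit k = x (n-1-k) := by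
  induction n generalizing k with
  | zero => omega
  | succ n ih =>
    have hc : gcode x (n+1) = 2 * gcode x n + gbit x n := rfl
    have hb := gbit_le x n
    cases k with
    | zero =>
      rw [hc, Nat.testBit_zero]
      simp only [Nat.add_sub_cancel, Nat.sub_zero]
      have h2 : (2 * gcode x n + gbit x n) % 2 = gbit x n := by omega
      rw [h2]
      unfold gbit; cases x n <;> simp
    | succ k =>
      rw [hc, Nat.testBit_succ]
      have h2 : (2 * gcode x n + gbit x n) / 2 = gcode x n := by omega
      rw [h2, ih k (by omega)]
      congr 1
      omega

lemma gdec_inj (n : ℕ) {m₁ m₂ : ℕ} (h₁ : m₁ < 2^n) (h₂ : m₂ < 2^n)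
    (h : gdec n m₁ = gdec n m₂) : m₁ = m₂ := by
  apply Nat.eq_of_testBit_eq
  intro k
  by_cases hk : k < n
  · have hi : n - 1 - (n - 1 - k) = k := by omega
    have := Finset.ext_iff.mp h ⟨n-1-k, by omega⟩
    simp only [gdec, Finset.mem_filter, Finset.mem_univ, true_and] at this
    simp only [hi] at this
    by_cases hb : m₁.testBit k
    · rw [hb, (this.mp hb)]
    · simp only [Bool.not_eq_true] at hb
      rw [hb]
      by_cases hb2 : m₂.testBit k
      · exact absurd (this.mpr hb2) (by simp [hb])
      · simp only [Bool.not_eq_true] at hb2; rw [hb2]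
  · push_neg at hk
    rw [Nat.testBit_lt_two_pow (lt_of_lt_of_le h₁ (Nat.pow_le_pow_right (by norm_num) hk)),
        Nat.testBit_lt_two_pow (lt_of_lt_of_le h₂ (Nat.pow_le_pow_right (by norm_num) hk))]

lemma gdec_gcode (x : ℕ → Bool) (n : ℕ) :
    gdec n (gcode x n) = Finset.univ.filter fun i : Fin n => x i = true := by
  ext i
  simp only [gdec, Finset.mem_filter, Finset.mem_univ, true_and]
  rw [testBit_gcode x n _ (by omega)]
  have : n - 1 - (n - 1 - (i:ℕ)) = (i:ℕ) := by omega
  rw [this]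

lemma card_gI (p : ℕ → ℕ) (n : ℕ) (hp : p n ≤ 2^n) : (gI p n).card = p n := by
  rw [gI, Finset.card_image_of_injOn, Finset.card_range]
  intro j₁ h₁ j₂ h₂ h
  simp only [Finset.coe_range, Set.mem_Iio] at h₁ h₂
  have hm₁ : (gt' p n + j₁) % 2^n < 2^n := Nat.mod_lt _ (by positivity)
  have hm₂ : (gt' p n + j₂) % 2^n < 2^n := Nat.mod_lt _ (by positivity)
  have heq := gdec_inj n hm₁ hm₂ h
  have ht := gt'_lt p n
  -- recover j from (t+j) % 2^n
  have key : ∀ j : ℕ, j < 2^n → ((gt' p n + j) % 2^n + (2^n - gt' p n)) % 2^n = j := by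
    intro j hj
    rw [Nat.mod_add_mod]
    have : gt' p n + j + (2^n - gt' p n) = j + 2^n := by omega
    rw [this, Nat.add_mod_right, Nat.mod_eq_of_lt hj]
  have := (key j₁ (by omega)).symm.trans (by rw [heq, key j₂ (by omega)])
  exact this

lemma mem_gI (p : ℕ → ℕ) (x : ℕ → Bool) (n : ℕ) (hp : p n ≤ 2^n) :
    (Finset.univ.filter fun i : Fin n => x i = true) ∈ gI p n ↔ gd p x n < p n := by
  have ht := gt'_lt p n
  have hc := gcode_lt x n
  rw [← gdec_gcode, gI, Finset.mem_image]
  constructor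
  · rintro ⟨j, hj, h⟩
    rw [Finset.mem_range] at hj
    have hm : (gt' p n + j) % 2^n < 2^n := Nat.mod_lt _ (by positivity)
    have heq := gdec_inj n hm hc h
    have : gd p x n = j := by
      rw [gd, ← heq, Nat.mod_add_mod]
      have h2 : gt' p n + j + (2^n - gt' p n) = j + 2^n := by omega
      rw [h2, Nat.add_mod_right, Nat.mod_eq_of_lt (by omega : j < 2^n)]
    omega
  · intro h
    refine ⟨gd p x n, Finset.mem_range.mpr h, ?_⟩
    congr 1
    rw [gd, Nat.add_mod_mod]
    have h2 : gt' p n + (gcode x n + (2^n - gt' p n)) = gcode x n + 2^n := by omega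
    rw [h2, Nat.add_mod_right, Nat.mod_eq_of_lt hc]

lemma gd_rec (p : ℕ → ℕ) (x : ℕ → Bool) (n : ℕ) (hp : gd p x n ≥ p n) :
    gd p x (n+1) = 2 * (gd p x n - p n) + gbit x n := by
  have hb := gbit_le x n
  have ht : gt' p n < 2^n := gt'_lt p n
  have ht1 : gt' p (n+1) < 2^(n+1) := gt'_lt p (n+1)
  have hd : gd p x n < 2^n := gd_lt p x n
  have hc : gcode x n < 2^n := gcode_lt x n
  have e1 : gcode x n + (2^n - gt' p n)
      = 2^n * ((gcode x n + (2^n - gt' p n)) / 2^n) + gd p x n := (Nat.div_add_mod _ _).symm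
  have e2 : 2 * (gt' p n + p n)
      = 2^(n+1) * ((2 * (gt' p n + p n)) / 2^(n+1)) + gt' p (n+1) := by
    conv_rhs => rw [show gt' p (n+1) = (2 * (gt' p n + p n)) % 2^(n+1) from rfl]
    exact (Nat.div_add_mod _ _).symm
  set q := (gcode x n + (2^n - gt' p n)) / 2^n with hq
  set r := (2 * (gt' p n + p n)) / 2^(n+1) with hr
  have key : (gd p x (n+1) : ℤ) = ((2 * (gd p x n - p n) + gbit x n : ℕ) : ℤ) := by
    have hdef : gd p x (n+1) = (gcode x (n+1) + (2^(n+1) - gt' p (n+1))) % 2^(n+1) := rfl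
    rw [hdef]
    have hcast : ((gcode x (n+1) + (2^(n+1) - gt' p (n+1))) % 2^(n+1) : ℕ)
        = (((gcode x (n+1) : ℤ) + (2^(n+1) - (gt' p (n+1) : ℤ))) % 2^(n+1) : ℤ) := by
      push_cast [Nat.cast_sub ht1.le]
      ring_nf
    rw [hcast]
    have hc1 : (gcode x (n+1) : ℤ) = 2 * gcode x n + gbit x n := by
      exact_mod_cast congrArg (Nat.cast : ℕ → ℤ) (rfl : gcode x (n+1) = 2 * gcode x n + gbit x n)
    have e1' : (gcode x n : ℤ) + (2^n - gt' p n) = q * 2^n + gd p x n := by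
      have := congrArg (Nat.cast : ℕ → ℤ) e1
      push_cast [Nat.cast_sub ht.le] at this
      linarith
    have e2' : 2 * ((gt' p n : ℤ) + p n) = r * 2^(n+1) + gt' p (n+1) := by
      have := congrArg (Nat.cast : ℕ → ℤ) e2
      push_cast at this
      linarith
    have hnum : (gcode x (n+1) : ℤ) + (2^(n+1) - (gt' p (n+1) : ℤ))
        = (2 * ((gd p x n : ℤ) - p n) + gbit x n) + ((q : ℤ) + r) * 2^(n+1) := by
      rw [hc1]
      have h2 : (2:ℤ)^(n+1) = 2 * 2^n := by ring
      rw [h2] at e2' ⊢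
      linarith
    rw [hnum, Int.add_mul_emod_self_right]
    rw [Int.emod_eq_of_lt]
    · push_cast [Nat.cast_sub hp]
      ring
    · have : (p n : ℤ) ≤ gd p x n := by exact_mod_cast hp
      linarith [gbit_le x n, (show (0:ℤ) ≤ gbit x n by positivity)]
    · have hd' : (gd p x n : ℤ) < 2^n := by exact_mod_cast hd
      have hb' : (gbit x n : ℤ) ≤ 1 := by exact_mod_cast hb
      have hp' : (p n : ℤ) ≥ 0 := by positivity
      have : (2:ℤ)^(n+1) = 2 * 2^n := by ring
      rw [this]
      linarith
  exact_mod_cast key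

lemma gsum_tendsto (p : ℕ → ℕ)
    (hsum : ∑' n, (p n : ℝ≥0∞) / 2 ^ n = ∞) :
    Filter.Tendsto (fun M => ∑ n ∈ Finset.range M, (p n : ℝ) / 2 ^ n)
      Filter.atTop Filter.atTop := by
  set a : ℕ → ℝ := fun n => (p n : ℝ) / 2 ^ n with ha
  have hnn : ∀ n, 0 ≤ a n := fun n => by positivity
  have hA : ¬ Summable a := by
    intro hs
    have heq : ∀ n, ENNReal.ofReal (a n) = (p n : ℝ≥0∞) / 2 ^ n := by
      intro n
      rw [ha]
      rw [ENNReal.ofReal_div_of_pos (by positivity)]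
      congr 1
      · simp
      · rw [show ((2:ℝ)^n) = ((2^n : ℕ) : ℝ) by push_cast; ring]
        rw [ENNReal.ofReal_natCast]
        push_cast
        ring
    have := ENNReal.ofReal_tsum_of_nonneg hnn hs
    rw [tsum_congr heq] at this
    rw [hsum] at this
    exact ENNReal.ofReal_ne_top this
  by_contra h
  exact hA ((summable_iff_not_tendsto_nat_atTop_of_nonneg hnn).mpr h)

/-- If `π(n) ≤ 2^n` and `∑ π(n)/2^n = ∞`, then there are sets `I_n ⊆ P(n)` with
`|I_n| = π(n)` such that every `x ⊆ ω` satisfies `x ∩ n ∈ I_n` for infinitely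
many `n`: the guessed set is all of `P(ω)`. -/
theorem exists_guessing_sequence_all_reals
    (π : ℕ → ℕ) (hle : ∀ n, π n ≤ 2 ^ n)
    (hsum : ∑' n, (π n : ℝ≥0∞) / 2 ^ n = ∞) :
    ∃ I : (n : ℕ) → Finset (Finset (Fin n)),
      (∀ n, (I n).card = π n) ∧
      ∀ x : ℕ → Bool,
        {n | (Finset.univ.filter fun i : Fin n => x i = true) ∈ I n}.Infinite := by
  refine ⟨gI π, fun n => card_gI π n (hle n), ?_⟩
  intro x
  by_contra hfin
  rw [Set.not_infinite] at hfin
  obtain ⟨C, hC⟩ := hfin.bddAbove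
  have hd : ∀ n, n ≥ C + 1 → π n ≤ gd π x n := by
    intro n hn
    by_contra h
    push_neg at h
    have : n ∈ {n | (Finset.univ.filter fun i : Fin n => x i = true) ∈ gI π n} :=
      (mem_gI π x n (hle n)).mpr h
    have := hC this
    omega
  set N := C + 1 with hN
  set e : ℕ → ℝ := fun n => (gd π x n : ℝ) / 2 ^ n with he
  have he_nonneg : ∀ n, 0 ≤ e n := fun n => by positivity
  have he_lt : ∀ n, e n < 1 := by
    intro n
    rw [he]
    rw [div_lt_one (by positivity)]
    exact_mod_cast gd_lt π x n
  have hstep : ∀ n ≥ N, e (n+1) ≤ e n - (π n : ℝ)/2^n + 1/2^(n+1) := by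
    intro n hn
    have hrec := gd_rec π x n (hd n hn)
    have hb := gbit_le x n
    have hple : π n ≤ gd π x n := hd n hn
    simp only [he]
    rw [hrec]
    have hcast : ((2 * (gd π x n - π n) + gbit x n : ℕ) : ℝ)
        = 2 * ((gd π x n : ℝ) - π n) + (gbit x n : ℝ) := by
      push_cast [Nat.cast_sub hple]; ring
    rw [hcast]
    have hb' : (gbit x n : ℝ) ≤ 1 := by exact_mod_cast hb
    have hsplit : (2 * ((gd π x n : ℝ) - π n) + (gbit x n : ℝ)) / 2^(n+1)
        = (gd π x n : ℝ)/2^n - (π n : ℝ)/2^n + (gbit x n : ℝ)/2^(n+1) := by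
      field_simp
      ring
    rw [hsplit]
    have : (gbit x n : ℝ)/2^(n+1) ≤ 1/2^(n+1) :=
      (div_le_div_iff_of_pos_right (by positivity)).mpr hb'
    linarith
  have hbound : ∀ k, e (N + k) + ∑ n ∈ Finset.Ico N (N + k), (π n : ℝ)/2^n
      ≤ e N + ∑ n ∈ Finset.Ico N (N + k), 1/2^(n+1) := by
    intro k
    induction k with
    | zero => simp
    | succ k ih =>
      have h1 : N ≤ N + k := by omega
      rw [show N + (k+1) = (N + k) + 1 by omega,
          Finset.sum_Ico_succ_top h1, Finset.sum_Ico_succ_top h1]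
      have := hstep (N + k) (by omega)
      linarith
  have hIco_le : ∀ k, ∑ n ∈ Finset.Ico N (N + k), (π n : ℝ)/2^n ≤ 2 := by
    intro k
    have hgeo : ∑ n ∈ Finset.Ico N (N + k), (1:ℝ)/2^(n+1) ≤ 1 := by
      have h1 : ∑ n ∈ Finset.Ico N (N + k), (1:ℝ)/2^(n+1)
          ≤ ∑ n ∈ Finset.range (N + k), (1:ℝ)/2^(n+1) := by
        apply Finset.sum_le_sum_of_subset_of_nonneg
        · intro i hi
          rw [Finset.mem_Ico] at hi
          rw [Finset.mem_range]
          omega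
        · intro i _ _; positivity
      have h2 : ∑ n ∈ Finset.range (N + k), (1:ℝ)/2^(n+1)
          = (1/2) * ∑ n ∈ Finset.range (N + k), (1/2:ℝ)^n := by
        rw [Finset.mul_sum]
        apply Finset.sum_congr rfl
        intro i _
        rw [div_pow, one_pow]
        ring
      have h3 := sum_geometric_two_le (N + k)
      rw [h2] at h1
      linarith
    have := hbound k
    have h4 := he_nonneg (N + k)
    have h5 := he_lt N
    linarith
  have htend := gsum_tendsto π hsum
  obtain ⟨M, hM⟩ := (Filter.tendsto_atTop.mp htend
    ((∑ n ∈ Finset.range N, (π n : ℝ)/2^n) + 3)).exists_forall_of_atTop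
  have hM' := hM (max M N) (le_max_left _ _)
  have hNM : N ≤ max M N := le_max_right _ _
  have hsplit : ∑ n ∈ Finset.range (max M N), (π n : ℝ)/2^n
      = ∑ n ∈ Finset.range N, (π n : ℝ)/2^n
        + ∑ n ∈ Finset.Ico N (max M N), (π n : ℝ)/2^n := by
    rw [← Finset.sum_range_add_sum_Ico _ hNM]
  have := hIco_le (max M N - N)
  rw [show N + (max M N - N) = max M N by omega] at this
  rw [hsplit] at hM'
  linarith
end
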